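/- Let u : Ω → ℝ be a C^2 plurisubharmonic function on an open set Ω ⊆ ℂ^n and suppose that for all x ∈ Ω and all sufficiently small h ∈ ℝ^{2n} one has u(x+h) + u(x−h) ≤ 2u(x) + C|h|². Then u ∈ C^{1,1} with |∇u(x) − ∇u(y)| ≤ (2n−1)C|x−y| for x, y in any convex subset of Ω. -/

import Mathlib

/-!
Expanding `t ↦ u (x + t v)` to second order, the symmetric second difference
`u (x + t v) + u (x - t v) - 2 u x` is `t² D²u(x)(v,v) + o(t²)`, so the hypothesis gives
`D²u(x)(v,v) ≤ C |v|²`. Applied to `J v`, which has the same norm, plurisubharmonicity turns this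
into `D²u(x)(v,v) ≥ -C |v|²`. By polarization and the parallelogram law a symmetric bilinear form
whose quadratic form is bounded by `C |v|²` in absolute value has norm at most `C`, so the mean
value inequality makes `∇u` even `C`-Lipschitz on convex subsets of `Ω`.
-/

noncomputable def realHessWithin {E : Type*} [NormedAddCommGroup E] [NormedSpace ℝ E]
    (u : E → ℝ) (Ω : Set E) (x v w : E) : ℝ :=
  iteratedFDerivWithin ℝ 2 u Ω x ![v, w]

open Filter Asymptotics Topology

theorem isLittleO_symmetric_second_difference {F : Type*} [NormedAddCommGroup F]
    [NormedSpace ℝ F] {g g' : ℝ → F} {a : F} (hg : ∀ᶠ t in 𝓝 0, HasDerivAt g (g' t) t)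
    (hg' : HasDerivAt g' a 0) :
    (fun t => g t + g (-t) - (2 : ℝ) • g 0 - t ^ 2 • a) =o[𝓝 0] fun t => t ^ 2 := by
  obtain ⟨r, hr, hball⟩ := Metric.eventually_nhds_iff_ball.1 hg
  have hnhds : 𝓝[Metric.ball (0 : ℝ) r] 0 = 𝓝 0 :=
    nhdsWithin_eq_nhds.2 (Metric.ball_mem_nhds 0 hr)
  have hderiv : ∀ t ∈ Metric.ball (0 : ℝ) r, HasDerivWithinAt
      (fun t => g t + g (-t) - (2 : ℝ) • g 0 - t ^ 2 • a)
      (g' t - g' (-t) - (2 * t) • a) (Metric.ball 0 r) t := by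
    intro t ht
    have hneg : -t ∈ Metric.ball (0 : ℝ) r := by simpa using ht
    have := (((hball t ht).add ((hball (-t) hneg).scomp t (hasDerivAt_neg t))).sub_const
      ((2 : ℝ) • g 0)).sub ((hasDerivAt_pow 2 t).smul_const a)
    refine (this.congr_deriv ?_).hasDerivWithinAt
    simp [sub_eq_add_neg]
  have hsmall : (fun t => g' t - g' (-t) - (2 * t) • a) =o[𝓝 0] fun t => t := by
    have h₁ := hasDerivAt_iff_isLittleO.1 hg'
    have h₂ := h₁.comp_tendsto (continuous_neg.tendsto' (0 : ℝ) 0 neg_zero)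
    simp only [Function.comp_def, sub_zero] at h₁ h₂
    refine (h₁.sub h₂.of_neg_right).congr_left fun t => ?_
    rw [neg_smul, two_mul, add_smul]
    abel
  rw [← hnhds] at hsmall ⊢
  simpa [two_smul] using (convex_ball (0 : ℝ) r).isLittleO_pow_succ_real
    (Metric.mem_ball_self hr) hderiv (n := 1) (by simpa using hsmall)

theorem ContinuousLinearMap.norm_le_of_abs_apply_self_le {E : Type*} [NormedAddCommGroup E]
    [InnerProductSpace ℝ E] {B : E →L[ℝ] E →L[ℝ] ℝ} (hB : ∀ v w, B v w = B w v) {C : ℝ}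
    (hC : 0 ≤ C) (h : ∀ v, |B v v| ≤ C * ‖v‖ ^ 2) : ‖B‖ ≤ C := by
  refine opNorm_le_of_unit_norm hC fun v hv => opNorm_le_of_unit_norm hC fun w hw => ?_
  have hpolar : 4 * B v w = B (v + w) (v + w) - B (v - w) (v - w) := by
    simp only [map_add, map_sub, add_apply, sub_apply, hB w v]
    ring
  have hpar : ‖v + w‖ ^ 2 + ‖v - w‖ ^ 2 = 4 := by
    have := parallelogram_law_with_norm ℝ v w
    rw [hv, hw] at this
    nlinarith
  have h₁ := abs_le.1 (h (v + w))
  have h₂ := abs_le.1 (h (v - w))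
  rw [Real.norm_eq_abs, abs_le]
  constructor <;> nlinarith

section

variable {E : Type*} [NormedAddCommGroup E] [NormedSpace ℝ E] {u : E → ℝ} {x : E}

theorem realHessWithin_of_isOpen {Ω : Set E} (hΩ : IsOpen Ω) (hx : x ∈ Ω) (v w : E) :
    realHessWithin u Ω x v w = fderiv ℝ (fderiv ℝ u) x v w := by
  rw [realHessWithin, iteratedFDerivWithin_of_isOpen 2 hΩ hx, iteratedFDeriv_two_apply]
  rfl

theorem ContDiffAt.fderiv_fderiv_apply_self_le_of_second_difference_le (hu : ContDiffAt ℝ 2 u x)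
    {C : ℝ} (hsd : ∀ᶠ h in 𝓝 0, u (x + h) + u (x - h) ≤ 2 * u x + C * ‖h‖ ^ 2) (v : E) :
    fderiv ℝ (fderiv ℝ u) x v v ≤ C * ‖v‖ ^ 2 := by
  set a := fderiv ℝ (fderiv ℝ u) x v v
  have hline (t : ℝ) : HasDerivAt (fun t : ℝ => x + t • v) v t := by
    simpa using ((hasDerivAt_id t).smul_const v).const_add x
  have hsmul : Tendsto (fun t : ℝ => t • v) (𝓝 0) (𝓝 0) := by
    simpa using (tendsto_id (x := 𝓝 (0 : ℝ))).smul_const v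
  have hdiff : ∀ᶠ t in 𝓝 (0 : ℝ),
      HasDerivAt (fun t => u (x + t • v)) (fderiv ℝ u (x + t • v) v) t := by
    have hnear : Tendsto (fun t : ℝ => x + t • v) (𝓝 0) (𝓝 x) := by
      simpa using hsmul.const_add x
    filter_upwards [hnear.eventually (hu.eventually (by simp))] with t ht
    exact (ht.differentiableAt (by norm_num)).hasFDerivAt.comp_hasDerivAt t (hline t)
  have hdiff₂ : HasDerivAt (fun t : ℝ => fderiv ℝ u (x + t • v) v) a 0 := by
    have hD : HasFDerivAt (fderiv ℝ u) (fderiv ℝ (fderiv ℝ u) x) x :=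
      ((hu.fderiv_right (m := 1) le_rfl).differentiableAt one_ne_zero).hasFDerivAt
    simpa using ((hD.comp_hasDerivAt_of_eq 0 (hline 0) (by simp)).clm_apply
      (hasDerivAt_const 0 v))
  have hquot : Tendsto (fun t => (u (x + t • v) + u (x - t • v) - 2 * u x) / t ^ 2) (𝓝[≠] 0)
      (𝓝 a) := by
    have hrem : Tendsto (fun t => (u (x + t • v) + u (x + -t • v) - (2 : ℝ) • u (x + (0 : ℝ) • v)
        - t ^ 2 • a) / t ^ 2) (𝓝[≠] 0) (𝓝 0) :=
      (isLittleO_symmetric_second_difference hdiff hdiff₂).tendsto_div_nhds_zero.mono_left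
        nhdsWithin_le_nhds
    refine (zero_add a ▸ hrem.add_const a).congr'
      (eventually_nhdsWithin_of_forall fun t (ht : t ≠ 0) => ?_)
    simp only [neg_smul, ← sub_eq_add_neg, zero_smul, add_zero, smul_eq_mul]
    field_simp
    ring
  refine le_of_tendsto hquot ?_
  filter_upwards [self_mem_nhdsWithin, (hsmul.eventually hsd).filter_mono nhdsWithin_le_nhds]
    with t (ht : t ≠ 0) hsd_t
  rw [div_le_iff₀ (by positivity), norm_smul, mul_pow, Real.norm_eq_abs, sq_abs] at *
  linarith

end

theorem c11_of_psh_and_second_difference_general {n : ℕ}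
    (Ω : Set (EuclideanSpace ℝ (Fin (2 * n)))) (hΩ : IsOpen Ω)
    (u : EuclideanSpace ℝ (Fin (2 * n)) → ℝ) (hu : ContDiffOn ℝ 2 u Ω)
    (J : EuclideanSpace ℝ (Fin (2 * n)) →ₗ[ℝ] EuclideanSpace ℝ (Fin (2 * n)))
    (hJiso : ∀ v, ‖J v‖ = ‖v‖)
    (hpsh : ∀ x ∈ Ω, ∀ v,
      0 ≤ realHessWithin u Ω x v v + realHessWithin u Ω x (J v) (J v))
    (C : ℝ) (hC : 0 ≤ C)
    (hsd : ∀ x ∈ Ω, ∃ δ > 0, ∀ h : EuclideanSpace ℝ (Fin (2 * n)), ‖h‖ < δ →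
      x + h ∈ Ω ∧ x - h ∈ Ω ∧ u (x + h) + u (x - h) ≤ 2 * u x + C * ‖h‖ ^ 2) :
    ∀ s ⊆ Ω, Convex ℝ s → ∀ x ∈ s, ∀ y ∈ s,
      ‖gradient u x - gradient u y‖ ≤ (2 * (n : ℝ) - 1) * C * ‖x - y‖ := by
  intro s hsΩ hs x hx y hy
  have hu_at : ∀ z ∈ Ω, ContDiffAt ℝ 2 u z := fun z hz => hu.contDiffAt (hΩ.mem_nhds hz)
  have hupper : ∀ z ∈ Ω, ∀ v, fderiv ℝ (fderiv ℝ u) z v v ≤ C * ‖v‖ ^ 2 := fun z hz => by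
    obtain ⟨δ, hδ, hδsd⟩ := hsd z hz
    refine (hu_at z hz).fderiv_fderiv_apply_self_le_of_second_difference_le ?_
    exact Metric.eventually_nhds_iff.2 ⟨δ, hδ, fun h hh => (hδsd h (by simpa using hh)).2.2⟩
  have hlower : ∀ z ∈ Ω, ∀ v, -(C * ‖v‖ ^ 2) ≤ fderiv ℝ (fderiv ℝ u) z v v := fun z hz v => by
    have h := hpsh z hz v
    rw [realHessWithin_of_isOpen hΩ hz, realHessWithin_of_isOpen hΩ hz] at h
    have := hupper z hz (J v)
    rw [hJiso] at this
    linarith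
  have hHess : ∀ z ∈ s, ‖fderiv ℝ (fderiv ℝ u) z‖ ≤ C := fun z hz =>
    ContinuousLinearMap.norm_le_of_abs_apply_self_le ((hu_at z (hsΩ hz)).isSymmSndFDerivAt
      (by simp)) hC fun v => abs_le.2 ⟨hlower z (hsΩ hz) v, hupper z (hsΩ hz) v⟩
  have hlip : ‖fderiv ℝ u x - fderiv ℝ u y‖ ≤ C * ‖x - y‖ :=
    hs.norm_image_sub_le_of_norm_hasFDerivWithin_le (fun z hz =>
      (((hu_at z (hsΩ hz)).fderiv_right (m := 1) le_rfl).differentiableAt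
        one_ne_zero).hasFDerivAt.hasFDerivWithinAt) hHess hy hx
  rw [gradient, gradient, ← map_sub, LinearIsometryEquiv.norm_map]
  rcases n.eq_zero_or_pos with rfl | hn
  · obtain rfl : x = y := PiLp.ext fun i => i.elim0
    simp
  · refine hlip.trans ?_
    rw [mul_assoc]
    exact le_mul_of_one_le_left (by positivity) (by linarith [(Nat.one_le_cast.2 hn : (1 : ℝ) ≤ n)])

/-- Let `u` be a `C²` plurisubharmonic function on an open `Ω ⊆ ℂⁿ ≅ ℝ²ⁿ` (with complex
structure `J`, plurisubharmonicity expressed as `D²u(v,v) + D²u(Jv,Jv) ≥ 0`) whose second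
differences satisfy `u(x+h) + u(x-h) ≤ 2u(x) + C|h|²` for small `h`. Then on every convex
subset of `Ω` the gradient of `u` is Lipschitz: `|∇u(x) - ∇u(y)| ≤ (2n-1)C|x-y|`. -/
theorem c11_of_psh_and_second_difference {n : ℕ}
    (Ω : Set (EuclideanSpace ℝ (Fin (2 * n)))) (hΩ : IsOpen Ω)
    (u : EuclideanSpace ℝ (Fin (2 * n)) → ℝ) (hu : ContDiffOn ℝ 2 u Ω)
    (J : EuclideanSpace ℝ (Fin (2 * n)) →ₗ[ℝ] EuclideanSpace ℝ (Fin (2 * n)))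
    (hJsq : ∀ v, J (J v) = -v) (hJiso : ∀ v, ‖J v‖ = ‖v‖)
    (hpsh : ∀ x ∈ Ω, ∀ v,
      0 ≤ realHessWithin u Ω x v v + realHessWithin u Ω x (J v) (J v))
    (C : ℝ) (hC : 0 ≤ C)
    (hsd : ∀ x ∈ Ω, ∃ δ > 0, ∀ h : EuclideanSpace ℝ (Fin (2 * n)), ‖h‖ < δ →
      x + h ∈ Ω ∧ x - h ∈ Ω ∧ u (x + h) + u (x - h) ≤ 2 * u x + C * ‖h‖ ^ 2) :
    ∀ s ⊆ Ω, Convex ℝ s → ∀ x ∈ s, ∀ y ∈ s,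
      ‖gradient u x - gradient u y‖ ≤ (2 * (n : ℝ) - 1) * C * ‖x - y‖ :=
  c11_of_psh_and_second_difference_general Ω hΩ u hu J hJiso hpsh C hC hsd
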